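/- For all n ∈ ℕ and a > 0, one has γ_{a,2^{m(n+1)}} ≤ 2^{−ma}·γ_{a,2^{mn}}; in particular the sequence (γ_{a,2^{mn}})_n is either strictly decreasing or eventually constant zero (Lemma 2.2). -/
import Mathlib


open MeasureTheory Filter
open scoped ENNReal

noncomputable section

attribute [local instance] Classical.propDecidable

/-- The half-open unit cube `(0,1]^m`. -/
def unitCube (m : ℕ) : Set (Fin m → ℝ) := {x | ∀ i, x i ∈ Set.Ioc (0 : ℝ) 1}

/-- A half-open axis-parallel cube `∏_i (a_i, a_i + h]` with `h > 0`. -/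
def IsHalfOpenCube {m : ℕ} (Q : Set (Fin m → ℝ)) : Prop :=
  ∃ (a : Fin m → ℝ) (h : ℝ), 0 < h ∧ Q = {x | ∀ i, x i ∈ Set.Ioc (a i) (a i + h)}

/-- A finite partition of the unit cube into half-open axis-parallel subcubes. -/
def IsCubePartition (m : ℕ) (P : Finset (Set (Fin m → ℝ))) : Prop :=
  (∀ Q ∈ P, IsHalfOpenCube Q ∧ Q ⊆ unitCube m) ∧
    (P : Set (Set (Fin m → ℝ))).PairwiseDisjoint id ∧
    ⋃₀ (P : Set (Set (Fin m → ℝ))) = unitCube m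

/-- `𝔍_a(Q) = Λ(Q)^a · ν(Q)`. -/
def Jfun (m : ℕ) (ν : Measure (Fin m → ℝ)) (a : ℝ) (Q : Set (Fin m → ℝ)) : ℝ :=
  (volume Q).toReal ^ a * (ν Q).toReal

/-- `γ_{a,n} = inf_{Ξ ∈ Υ_n} max_{Q ∈ Ξ} 𝔍_a(Q)`, the infimum over partitions of the
unit cube into at most `n` half-open subcubes. -/
def gammaA (m : ℕ) (ν : Measure (Fin m → ℝ)) (a : ℝ) (n : ℕ) : ℝ :=
  sInf {r : ℝ | ∃ P : Finset (Set (Fin m → ℝ)), IsCubePartition m P ∧ P.card ≤ n ∧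
    r = sSup (Jfun m ν a '' ↑P)}

/-- The cube with corner `c` and side `h`. -/
def cubeSet {m : ℕ} (c : Fin m → ℝ) (h : ℝ) : Set (Fin m → ℝ) :=
  {x | ∀ i, x i ∈ Set.Ioc (c i) (c i + h)}

/-- One of the `2^m` half-side subcubes of `cubeSet c h`. -/
def subCube {m : ℕ} (c : Fin m → ℝ) (h : ℝ) (ε : Fin m → Bool) : Set (Fin m → ℝ) :=
  cubeSet (fun i => c i + (if ε i then h / 2 else 0)) (h / 2)

lemma subCube_isCube {m : ℕ} (c : Fin m → ℝ) {h : ℝ} (hh : 0 < h) (ε : Fin m → Bool) :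
    IsHalfOpenCube (subCube c h ε) :=
  ⟨_, h / 2, half_pos hh, rfl⟩

lemma subCube_subset {m : ℕ} (c : Fin m → ℝ) {h : ℝ} (hh : 0 < h) (ε : Fin m → Bool) :
    subCube c h ε ⊆ cubeSet c h := by
  intro x hx i
  have hxi := hx i
  simp only [cubeSet, Set.mem_setOf_eq, Set.mem_Ioc] at hxi ⊢
  by_cases hb : ε i = true <;> simp [hb] at hxi <;> constructor <;> linarith [hxi.1, hxi.2]

lemma cubeSet_eq_union {m : ℕ} (c : Fin m → ℝ) {h : ℝ} (hh : 0 < h) :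
    cubeSet c h = ⋃ ε : Fin m → Bool, subCube c h ε := by
  ext x
  simp only [Set.mem_iUnion]
  constructor
  · intro hx
    refine ⟨fun i => decide (c i + h / 2 < x i), fun i => ?_⟩
    have hxi := hx i
    simp only [Set.mem_Ioc] at hxi
    simp only [decide_eq_true_eq, Set.mem_Ioc]
    by_cases hc : c i + h / 2 < x i
    · rw [if_pos hc]
      constructor <;> linarith [hxi.2]
    · rw [if_neg hc]
      push_neg at hc
      constructor <;> linarith [hxi.1]
  · rintro ⟨ε, hx⟩
    exact subCube_subset c hh ε hx

lemma subCube_disjoint {m : ℕ} (c : Fin m → ℝ) {h : ℝ} (hh : 0 < h)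
    {ε ε' : Fin m → Bool} (hne : ε ≠ ε') :
    Disjoint (subCube c h ε) (subCube c h ε') := by
  rw [Set.disjoint_left]
  intro x hx hx'
  obtain ⟨i, hi⟩ := Function.ne_iff.mp hne
  have h1 := hx i
  have h2 := hx' i
  simp only [Set.mem_Ioc] at h1 h2
  cases hb : ε i <;> cases hb' : ε' i <;> rw [hb] at h1 <;> rw [hb'] at h2 <;>
    simp_all <;> linarith [h1.1, h1.2, h2.1, h2.2]

lemma volume_cubeSet {m : ℕ} (c : Fin m → ℝ) (h : ℝ) :
    volume (cubeSet c h) = ENNReal.ofReal h ^ m := by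
  have he : cubeSet c h = Set.pi Set.univ fun i => Set.Ioc (c i) (c i + h) := by
    ext x; simp [cubeSet, Set.mem_univ_pi]
  rw [he, volume_pi_pi]
  simp [Real.volume_Ioc]

lemma toReal_volume_cubeSet {m : ℕ} (c : Fin m → ℝ) {h : ℝ} (hh : 0 ≤ h) :
    (volume (cubeSet c h)).toReal = h ^ m := by
  rw [volume_cubeSet]
  simp [ENNReal.toReal_pow, ENNReal.toReal_ofReal hh]

lemma rpow_calc {h : ℝ} (hh : 0 < h) (a : ℝ) (m : ℕ) :
    (((h / 2) ^ m : ℝ)) ^ a = (2 : ℝ) ^ (-((m : ℝ) * a)) * ((h ^ m : ℝ)) ^ a := by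
  have h2 : ((2 : ℝ) ^ m)⁻¹ ^ a = (2 : ℝ) ^ (-((m : ℝ) * a)) := by
    rw [Real.inv_rpow (by positivity), ← Real.rpow_natCast (2 : ℝ) m,
      ← Real.rpow_mul (by norm_num), ← Real.rpow_neg (by norm_num)]
  rw [div_pow, div_eq_mul_inv, Real.mul_rpow (by positivity) (by positivity), h2]
  ring

lemma Jfun_nonneg {m : ℕ} (ν : Measure (Fin m → ℝ)) (a : ℝ) (Q : Set (Fin m → ℝ)) :
    0 ≤ Jfun m ν a Q := by
  unfold Jfun
  positivity

lemma Jfun_subCube_le {m : ℕ} (ν : Measure (Fin m → ℝ)) [IsFiniteMeasure ν] (a : ℝ)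
    (c : Fin m → ℝ) {h : ℝ} (hh : 0 < h) (ε : Fin m → Bool) :
    Jfun m ν a (subCube c h ε) ≤ (2 : ℝ) ^ (-((m : ℝ) * a)) * Jfun m ν a (cubeSet c h) := by
  unfold Jfun
  have hv : (volume (subCube c h ε)).toReal = (h / 2) ^ m :=
    toReal_volume_cubeSet _ (by linarith)
  have hv' : (volume (cubeSet c h)).toReal = h ^ m := toReal_volume_cubeSet _ hh.le
  rw [hv, hv', rpow_calc hh a m, mul_assoc]
  refine mul_le_mul_of_nonneg_left ?_ (Real.rpow_nonneg (by norm_num) _)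
  refine mul_le_mul_of_nonneg_left ?_ (Real.rpow_nonneg (by positivity) _)
  exact ENNReal.toReal_mono (measure_ne_top ν _) (measure_mono (subCube_subset c hh ε))

/-- Extract the corner/side data of a half-open cube. -/
def cubeData {m : ℕ} (Q : Set (Fin m → ℝ)) : (Fin m → ℝ) × ℝ :=
  if hQ : IsHalfOpenCube Q then ⟨hQ.choose, hQ.choose_spec.choose⟩ else ⟨0, 1⟩

lemma cubeData_spec {m : ℕ} {Q : Set (Fin m → ℝ)} (hQ : IsHalfOpenCube Q) :
    0 < (cubeData Q).2 ∧ Q = cubeSet (cubeData Q).1 (cubeData Q).2 := by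
  rw [cubeData, dif_pos hQ]
  exact hQ.choose_spec.choose_spec

/-- The `2^m` subcubes of a cube `Q`. -/
def subdiv {m : ℕ} (Q : Set (Fin m → ℝ)) : Finset (Set (Fin m → ℝ)) :=
  Finset.image (fun ε => subCube (cubeData Q).1 (cubeData Q).2 ε)
    (Finset.univ : Finset (Fin m → Bool))

lemma subdiv_card {m : ℕ} (Q : Set (Fin m → ℝ)) : (subdiv Q).card ≤ 2 ^ m := by
  calc (subdiv Q).card ≤ (Finset.univ : Finset (Fin m → Bool)).card :=
        Finset.card_image_le
    _ = 2 ^ m := by simp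

lemma subdiv_mem {m : ℕ} {Q Q' : Set (Fin m → ℝ)} (hQ : IsHalfOpenCube Q)
    (hQ' : Q' ∈ subdiv Q) : IsHalfOpenCube Q' ∧ Q' ⊆ Q := by
  obtain ⟨hpos, heq⟩ := cubeData_spec hQ
  obtain ⟨ε, _, rfl⟩ := Finset.mem_image.mp hQ'
  exact ⟨subCube_isCube _ hpos ε,
    le_of_le_of_eq (subCube_subset _ hpos ε) heq.symm⟩

lemma subdiv_sUnion {m : ℕ} {Q : Set (Fin m → ℝ)} (hQ : IsHalfOpenCube Q) :
    ⋃₀ (subdiv Q : Set (Set (Fin m → ℝ))) = Q := by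
  obtain ⟨hpos, heq⟩ := cubeData_spec hQ
  conv_rhs => rw [heq, cubeSet_eq_union _ hpos]
  ext x
  simp [subdiv, Set.mem_iUnion]

lemma subdiv_disjoint {m : ℕ} {Q : Set (Fin m → ℝ)} (hQ : IsHalfOpenCube Q)
    {s t : Set (Fin m → ℝ)} (hs : s ∈ subdiv Q) (ht : t ∈ subdiv Q) (hst : s ≠ t) :
    Disjoint s t := by
  obtain ⟨hpos, _⟩ := cubeData_spec hQ
  obtain ⟨ε, _, rfl⟩ := Finset.mem_image.mp hs
  obtain ⟨ε', _, rfl⟩ := Finset.mem_image.mp ht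
  exact subCube_disjoint _ hpos (fun hee => hst (congrArg _ hee))

lemma subdiv_J_le {m : ℕ} (ν : Measure (Fin m → ℝ)) [IsFiniteMeasure ν] (a : ℝ)
    {Q Q' : Set (Fin m → ℝ)} (hQ : IsHalfOpenCube Q) (hQ' : Q' ∈ subdiv Q) :
    Jfun m ν a Q' ≤ (2 : ℝ) ^ (-((m : ℝ) * a)) * Jfun m ν a Q := by
  obtain ⟨hpos, heq⟩ := cubeData_spec hQ
  obtain ⟨ε, _, rfl⟩ := Finset.mem_image.mp hQ'
  conv_rhs => rw [heq]
  exact Jfun_subCube_le ν a _ hpos ε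

lemma refine_partition {m : ℕ} (ν : Measure (Fin m → ℝ)) [IsFiniteMeasure ν] (a : ℝ)
    {P : Finset (Set (Fin m → ℝ))} (hP : IsCubePartition m P) :
    ∃ P' : Finset (Set (Fin m → ℝ)), IsCubePartition m P' ∧
      P'.card ≤ P.card * 2 ^ m ∧
      sSup (Jfun m ν a '' ↑P') ≤ (2 : ℝ) ^ (-((m : ℝ) * a)) * sSup (Jfun m ν a '' ↑P) := by
  obtain ⟨hcube, hdisj, huni⟩ := hP
  refine ⟨P.biUnion subdiv, ⟨?_, ?_, ?_⟩, ?_, ?_⟩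
  · intro Q' hQ'
    obtain ⟨Q, hQ, hQ'⟩ := Finset.mem_biUnion.mp hQ'
    obtain ⟨h1, h2⟩ := subdiv_mem (hcube Q hQ).1 hQ'
    exact ⟨h1, h2.trans (hcube Q hQ).2⟩
  · intro s hs t ht hst
    obtain ⟨Q1, hQ1, hs⟩ := Finset.mem_biUnion.mp hs
    obtain ⟨Q2, hQ2, ht⟩ := Finset.mem_biUnion.mp ht
    by_cases hQQ : Q1 = Q2
    · subst hQQ
      exact subdiv_disjoint (hcube Q1 hQ1).1 hs ht hst
    · have hd : Disjoint Q1 Q2 := hdisj hQ1 hQ2 hQQ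
      exact Set.disjoint_of_subset (subdiv_mem (hcube Q1 hQ1).1 hs).2
        (subdiv_mem (hcube Q2 hQ2).1 ht).2 hd
  · ext x
    simp only [Set.mem_sUnion, Finset.coe_biUnion, Set.mem_iUnion]
    constructor
    · rintro ⟨t, ⟨Q, hQ, ht⟩, hxt⟩
      rw [← huni]
      exact ⟨Q, hQ, by
        rw [← subdiv_sUnion (hcube Q hQ).1]; exact ⟨t, ht, hxt⟩⟩
    · intro hx
      rw [← huni] at hx
      obtain ⟨Q, hQ, hxQ⟩ := hx
      rw [← subdiv_sUnion (hcube Q hQ).1] at hxQ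
      obtain ⟨t, ht, hxt⟩ := hxQ
      exact ⟨t, ⟨Q, hQ, ht⟩, hxt⟩
  · calc (P.biUnion subdiv).card ≤ ∑ Q ∈ P, (subdiv Q).card := Finset.card_biUnion_le
      _ ≤ ∑ _Q ∈ P, 2 ^ m := Finset.sum_le_sum fun Q _ => subdiv_card Q
      _ = P.card * 2 ^ m := by rw [Finset.sum_const, smul_eq_mul]
  · refine Real.sSup_le ?_ ?_
    · rintro x ⟨Q', hQ', rfl⟩
      obtain ⟨Q, hQ, hQ'⟩ := Finset.mem_biUnion.mp hQ'
      calc Jfun m ν a Q' ≤ (2 : ℝ) ^ (-((m : ℝ) * a)) * Jfun m ν a Q :=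
            subdiv_J_le ν a (hcube Q hQ).1 hQ'
        _ ≤ (2 : ℝ) ^ (-((m : ℝ) * a)) * sSup (Jfun m ν a '' ↑P) := by
            refine mul_le_mul_of_nonneg_left ?_ (Real.rpow_nonneg (by norm_num) _)
            exact le_csSup ((P.finite_toSet.image _).bddAbove) ⟨Q, hQ, rfl⟩
    · refine mul_nonneg (Real.rpow_nonneg (by norm_num) _) ?_
      exact Real.sSup_nonneg (by rintro x ⟨Q, _, rfl⟩; exact Jfun_nonneg ν a Q)

/-- The set whose infimum defines `gammaA`. -/
def gammaSet (m : ℕ) (ν : Measure (Fin m → ℝ)) (a : ℝ) (n : ℕ) : Set ℝ :=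
  {r : ℝ | ∃ P : Finset (Set (Fin m → ℝ)), IsCubePartition m P ∧ P.card ≤ n ∧
    r = sSup (Jfun m ν a '' ↑P)}

lemma gammaA_eq (m : ℕ) (ν : Measure (Fin m → ℝ)) (a : ℝ) (n : ℕ) :
    gammaA m ν a n = sInf (gammaSet m ν a n) := rfl

lemma unitCube_isCube (m : ℕ) : IsHalfOpenCube (unitCube m) := by
  refine ⟨fun _ => 0, 1, one_pos, ?_⟩
  ext x
  simp [unitCube]

lemma gammaSet_nonempty (m : ℕ) (ν : Measure (Fin m → ℝ)) (a : ℝ) {n : ℕ} (hn : 1 ≤ n) :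
    (gammaSet m ν a n).Nonempty := by
  refine ⟨sSup (Jfun m ν a '' ↑({unitCube m} : Finset (Set (Fin m → ℝ)))),
    {unitCube m}, ⟨?_, ?_, ?_⟩, by simpa using hn, rfl⟩
  · intro Q hQ
    rw [Finset.mem_singleton] at hQ
    subst hQ
    exact ⟨unitCube_isCube m, subset_rfl⟩
  · simp
  · simp

lemma gammaSet_nonneg (m : ℕ) (ν : Measure (Fin m → ℝ)) (a : ℝ) (n : ℕ) :
    ∀ r ∈ gammaSet m ν a n, 0 ≤ r := by
  rintro r ⟨P, _, _, rfl⟩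
  exact Real.sSup_nonneg (by rintro x ⟨Q, _, rfl⟩; exact Jfun_nonneg ν a Q)

lemma gammaA_nonneg (m : ℕ) (ν : Measure (Fin m → ℝ)) (a : ℝ) (n : ℕ) :
    0 ≤ gammaA m ν a n :=
  Real.sInf_nonneg (gammaSet_nonneg m ν a n)

lemma gammaA_step (m : ℕ) (ν : Measure (Fin m → ℝ)) [IsFiniteMeasure ν] (a : ℝ) (n : ℕ) :
    gammaA m ν a (2 ^ (m * (n + 1)))
      ≤ (2 : ℝ) ^ (-((m : ℝ) * a)) * gammaA m ν a (2 ^ (m * n)) := by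
  set c : ℝ := (2 : ℝ) ^ (-((m : ℝ) * a)) with hc
  have hcpos : 0 < c := Real.rpow_pos_of_pos (by norm_num) _
  have key : ∀ r ∈ gammaSet m ν a (2 ^ (m * n)),
      gammaA m ν a (2 ^ (m * (n + 1))) ≤ c * r := by
    rintro r ⟨P, hP, hcard, rfl⟩
    obtain ⟨P', hP', hcard', hsup⟩ := refine_partition ν a hP
    have hmem : sSup (Jfun m ν a '' ↑P') ∈ gammaSet m ν a (2 ^ (m * (n + 1))) := by
      refine ⟨P', hP', ?_, rfl⟩
      calc P'.card ≤ P.card * 2 ^ m := hcard'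
        _ ≤ 2 ^ (m * n) * 2 ^ m := Nat.mul_le_mul_right _ hcard
        _ = 2 ^ (m * (n + 1)) := by rw [← pow_add]; ring_nf
    calc gammaA m ν a (2 ^ (m * (n + 1)))
        ≤ sSup (Jfun m ν a '' ↑P') :=
          csInf_le ⟨0, fun x hx => gammaSet_nonneg m ν a _ x hx⟩ hmem
      _ ≤ c * sSup (Jfun m ν a '' ↑P) := hsup
  have h2 : gammaA m ν a (2 ^ (m * (n + 1))) / c ≤ gammaA m ν a (2 ^ (m * n)) := by
    rw [gammaA_eq m ν a (2 ^ (m * n))]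
    refine le_csInf (gammaSet_nonempty m ν a Nat.one_le_two_pow) fun r hr => ?_
    rw [div_le_iff₀ hcpos]
    calc gammaA m ν a (2 ^ (m * (n + 1))) ≤ c * r := key r hr
      _ = r * c := mul_comm _ _
  calc gammaA m ν a (2 ^ (m * (n + 1)))
      = c * (gammaA m ν a (2 ^ (m * (n + 1))) / c) := by field_simp
    _ ≤ c * gammaA m ν a (2 ^ (m * n)) := mul_le_mul_of_nonneg_left h2 hcpos.le

/-- **Lemma 2.2**: `γ_{a,2^{m(n+1)}} ≤ 2^{-ma} · γ_{a,2^{mn}}`; in particular the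
sequence `(γ_{a,2^{mn}})_n` is either strictly decreasing or eventually constant zero. -/
theorem statement3 (m : ℕ) (hm : 0 < m) (ν : Measure (Fin m → ℝ))
    [IsProbabilityMeasure ν] (hν : ν (unitCube m) = 1) (a : ℝ) (ha : 0 < a) :
    (∀ n : ℕ, gammaA m ν a (2 ^ (m * (n + 1)))
        ≤ (2 : ℝ) ^ (-((m : ℝ) * a)) * gammaA m ν a (2 ^ (m * n))) ∧
    (StrictAnti (fun n : ℕ => gammaA m ν a (2 ^ (m * n))) ∨
      ∃ N : ℕ, ∀ n ≥ N, gammaA m ν a (2 ^ (m * n)) = 0) := by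
  have hstep := fun n => gammaA_step m ν a n
  refine ⟨hstep, ?_⟩
  set g : ℕ → ℝ := fun n => gammaA m ν a (2 ^ (m * n)) with hg
  have hgnn : ∀ n, 0 ≤ g n := fun n => gammaA_nonneg m ν a _
  set c : ℝ := (2 : ℝ) ^ (-((m : ℝ) * a)) with hc
  have hcpos : 0 < c := Real.rpow_pos_of_pos (by norm_num) _
  have hc1 : c < 1 := by
    refine Real.rpow_lt_one_of_one_lt_of_neg (by norm_num) ?_
    have : 0 < (m : ℝ) * a := mul_pos (Nat.cast_pos.mpr hm) ha
    linarith
  by_cases hz : ∃ N : ℕ, g N = 0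
  · right
    obtain ⟨N, hN⟩ := hz
    refine ⟨N, fun n hn => ?_⟩
    induction n, hn using Nat.le_induction with
    | base => exact hN
    | succ k hk ih =>
      have hk0 : g k = 0 := ih
      have h1 : g (k + 1) ≤ c * g k := hstep k
      rw [hk0, mul_zero] at h1
      exact le_antisymm h1 (hgnn (k + 1))
  · left
    push_neg at hz
    have hpos : ∀ n, 0 < g n := fun n => lt_of_le_of_ne (hgnn n) (Ne.symm (hz n))
    refine strictAnti_nat_of_succ_lt fun n => ?_
    calc g (n + 1) ≤ c * g n := hstep n
      _ < 1 * g n := mul_lt_mul_of_pos_right hc1 (hpos n)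
      _ = g n := one_mul _

end
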